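/- There exists a probability measure on {−1,1}³ whose coordinate random variables X, Y, Z satisfy E[X] = E[Y] = E[Z] = 0, E[XY] = 1/2, E[XZ] = −1/2, and E[YZ] = −1/2, even though these moment values violate Bell's original inequality 1 + E[YZ] ≥ |E[XY] − E[XZ]| (since 1/2 < 1). Hence Bell's original inequality is not necessary for the existence of a joint probability distribution of three ±1-valued random variables with zero means. -/

import Mathlib

/-- The sample space `{-1,1}³` with coordinates `X, Y, Z`. -/
abbrev SignTriple : Type := ({-1, 1} : Finset ℝ) × ({-1, 1} : Finset ℝ) × ({-1, 1} : Finset ℝ)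

/-!
Since the monomials `1, x, y, z, xy, yz, xz, xyz` are orthogonal on `{-1,1}³`, the function
`(1 + a x y + b y z + c x z) / 8` has total mass `1`, zero means and correlations
`E[XY] = a`, `E[YZ] = b`, `E[XZ] = c`; it is a probability density as soon as it is nonnegative at
the eight sign triples. For `(a, b, c) = (1/2, -1/2, -1/2)` its values are `5/16` and `1/16`.
-/

noncomputable def signDensity (a b c x y z : ℝ) : ℝ := (1 + a * x * y + b * y * z + c * x * z) / 8

lemma Finset.sum_coe_sort_pair {α M : Type*} [DecidableEq α] [AddCommMonoid M] {a b : α}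
    (hab : a ≠ b) (g : ({a, b} : Finset α) → M) :
    ∑ x, g x = g ⟨a, by simp⟩ + g ⟨b, by simp⟩ := by
  refine Fintype.sum_eq_add _ _ (by simpa using hab) fun ⟨x, hx⟩ hne => ?_
  simp only [Finset.mem_insert, Finset.mem_singleton] at hx
  rcases hx with rfl | rfl <;> simp at hne

lemma exists_signTriple_law (a b c : ℝ)
    (hpos : ∀ x ∈ ({-1, 1} : Finset ℝ), ∀ y ∈ ({-1, 1} : Finset ℝ), ∀ z ∈ ({-1, 1} : Finset ℝ),
      0 ≤ 1 + a * x * y + b * y * z + c * x * z) :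
    ∃ p : SignTriple → ℝ,
      (∀ s, 0 ≤ p s) ∧ (∑ s, p s = 1) ∧
      (∑ s, p s * (s.1 : ℝ)) = 0 ∧
      (∑ s, p s * (s.2.1 : ℝ)) = 0 ∧
      (∑ s, p s * (s.2.2 : ℝ)) = 0 ∧
      (∑ s, p s * ((s.1 : ℝ) * (s.2.1 : ℝ))) = a ∧
      (∑ s, p s * ((s.2.1 : ℝ) * (s.2.2 : ℝ))) = b ∧
      (∑ s, p s * ((s.1 : ℝ) * (s.2.2 : ℝ))) = c := by
  refine ⟨fun s => signDensity a b c s.1 s.2.1 s.2.2, fun s => ?_, ?_, ?_, ?_, ?_, ?_, ?_, ?_⟩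
  · exact div_nonneg (hpos _ s.1.2 _ s.2.1.2 _ s.2.2.2) (by norm_num)
  all_goals
    simp only [Fintype.sum_prod_type, Finset.sum_coe_sort_pair (show (-1 : ℝ) ≠ 1 by norm_num),
      signDensity]
    ring

theorem bell_original_not_necessary :
    (1 + (-1/2 : ℝ) < |(1/2 : ℝ) - (-1/2)|) ∧
    ∃ p : SignTriple → ℝ,
      (∀ s, 0 ≤ p s) ∧ (∑ s, p s = 1) ∧
      (∑ s, p s * (s.1 : ℝ)) = 0 ∧
      (∑ s, p s * (s.2.1 : ℝ)) = 0 ∧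
      (∑ s, p s * (s.2.2 : ℝ)) = 0 ∧
      (∑ s, p s * ((s.1 : ℝ) * (s.2.1 : ℝ))) = 1/2 ∧
      (∑ s, p s * ((s.2.1 : ℝ) * (s.2.2 : ℝ))) = -1/2 ∧
      (∑ s, p s * ((s.1 : ℝ) * (s.2.2 : ℝ))) = -1/2 := by
  refine ⟨by norm_num [abs_of_pos], exists_signTriple_law _ _ _ ?_⟩
  simp only [Finset.mem_insert, Finset.mem_singleton]
  rintro x (rfl | rfl) y (rfl | rfl) z (rfl | rfl) <;> norm_num
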